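/- For all positive integers N and d, the VC dimension of the class D((G_d)_N), where (G_d)_N is the class of N-component d-dimensional Gaussian mixture densities, is at least N(d² + 3d)/2. -/

import Mathlib

open Matrix

/-- A class `C` of subsets of `α` shatters a set `X` if every subset of `X`
is cut out of `X` by some member of `C`. -/
def Shatters {α : Type*} (C : Set (Set α)) (X : Set α) : Prop :=
  ∀ Y ⊆ X, ∃ B ∈ C, Y = X ∩ B

/-- The VC dimension of a class `C` of subsets: the supremum (in `ℕ∞`) of the
cardinalities of finite sets shattered by `C`. -/
noncomputable def vcDim {α : Type*} (C : Set (Set α)) : ℕ∞ :=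
  ⨆ (X : Finset α) (_ : Shatters C (X : Set α)), (X.card : ℕ∞)

/-- The `d`-dimensional Gaussian density with mean `μ` and covariance matrix `S`:
`x ↦ (2π)^{-d/2} |det S|^{-1/2} exp(-(x-μ)ᵀ S⁻¹ (x-μ)/2)`. -/
noncomputable def gaussianDensity {d : ℕ} (μ : Fin d → ℝ)
    (S : Matrix (Fin d) (Fin d) ℝ) : (Fin d → ℝ) → ℝ :=
  fun x => (2 * Real.pi) ^ (-(d : ℝ) / 2) * |S.det| ^ (-(1 : ℝ) / 2) *
    Real.exp (-((x - μ) ⬝ᵥ S⁻¹.mulVec (x - μ)) / 2)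

/-- `G_d`: the class of all `d`-dimensional Gaussian densities (the covariance
matrix being any real positive definite `d × d` matrix). -/
def Gaussians (d : ℕ) : Set ((Fin d → ℝ) → ℝ) :=
  {f | ∃ (μ : Fin d → ℝ) (S : Matrix (Fin d) (Fin d) ℝ), S.PosDef ∧ f = gaussianDensity μ S}

/-- `D(P)`: the class of superlevel sets `{x : f x > s}` for `f ∈ P` and `s > 0`. -/
def SuperLevels {α : Type*} (P : Set (α → ℝ)) : Set (Set α) :=
  {S | ∃ f ∈ P, ∃ s : ℝ, 0 < s ∧ S = {x | s < f x}}

/-- `(P)_N`: the class of `N`-component mixtures `p₁f₁ + ⋯ + p_N f_N` of members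
of `P`, with `p_i ≥ 0` summing to `1`. -/
def Mixtures {α : Type*} (N : ℕ) (P : Set (α → ℝ)) : Set (α → ℝ) :=
  {f | ∃ (g : Fin N → α → ℝ) (p : Fin N → ℝ),
    (∀ i, g i ∈ P) ∧ (∀ i, 0 ≤ p i) ∧ (∑ i, p i) = 1 ∧
    f = fun x => ∑ i, p i * g i x}

/-!
Any values on the `d(d+3)/2` points `±eₖ`, `(eₖ + eₗ)/√2` (`k ≠ l`) of the unit sphere of `ℝᵈ`
are taken by a quadratic `z ↦ a ⬝ z + zᵀ B z` without constant term. Subtracting `λ |z|²`,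
constant on the sphere, with `λ` large makes it strictly concave and very negative outside the
ball of radius `2`, so its exponential is a multiple of a Gaussian density with the prescribed
values on the points and negligible far away. Mixing the Gaussians built for `N` copies of the
point set, translated along a coordinate axis at mutual distance `3`, with weights cancelling
the multiples, a single threshold cuts out any prescribed subset of the `N d(d+3)/2` points.
-/

section

open Finset

theorem card_le_vcDim_of_forall_exists_iff {α ι : Type*} [Fintype ι] {C : Set (Set α)}
    (x : ι → α) (h : ∀ Y : Set ι, ∃ B ∈ C, ∀ i, x i ∈ B ↔ i ∈ Y) :
    (Fintype.card ι : ℕ∞) ≤ vcDim C := by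
  classical
  have hx : x.Injective := fun i j hij => by
    obtain ⟨B, -, hB⟩ := h {j}
    simpa using (hB i).1 (hij ▸ (hB j).2 rfl)
  have hshatters : Shatters C (univ.image x : Set α) := by
    intro Z hZ
    obtain ⟨B, hBC, hB⟩ := h (x ⁻¹' Z)
    refine ⟨B, hBC, Set.ext fun y => ⟨fun hy => ⟨hZ hy, ?_⟩, ?_⟩⟩
    · obtain ⟨i, -, rfl⟩ := mem_image.1 (hZ hy)
      exact (hB i).2 hy
    · rintro ⟨hy, hyB⟩
      obtain ⟨i, -, rfl⟩ := mem_image.1 hy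
      exact (hB i).1 hyB
  calc (Fintype.card ι : ℕ∞) = (univ.image x).card := by
        rw [card_image_of_injective _ hx, card_univ]
    _ ≤ vcDim C :=
        le_iSup₂ (f := fun (X : Finset α) (_ : Shatters C X) => (X.card : ℕ∞)) _ hshatters

theorem setOf_lt_sum_mem_superLevels_mixtures {α : Type*} {N : ℕ} {P : Set (α → ℝ)}
    (hN : 0 < N) {g : Fin N → α → ℝ} (hg : ∀ i, g i ∈ P) {c : Fin N → ℝ} (hc : ∀ i, 0 < c i)
    {s : ℝ} (hs : 0 < s) : {x | s < ∑ i, c i * g i x} ∈ SuperLevels (Mixtures N P) := by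
  have : Nonempty (Fin N) := ⟨⟨0, hN⟩⟩
  set W := ∑ i, c i
  have hW : 0 < W := sum_pos (fun i _ => hc i) univ_nonempty
  refine ⟨fun x => ∑ i, c i / W * g i x,
    ⟨g, fun i => c i / W, hg, fun i => (div_pos (hc i) hW).le, by rw [← sum_div, div_self hW.ne'],
      rfl⟩, s / W, div_pos hs hW, Set.ext fun x => ?_⟩
  simp only [Set.mem_ofPred_eq, div_mul_eq_mul_div, ← sum_div, div_lt_div_iff_of_pos_right hW]

section DotProduct

variable {n : Type*} [Fintype n]

theorem dotProduct_self_nonneg (z : n → ℝ) : 0 ≤ z ⬝ᵥ z := by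
  simpa using dotProduct_star_self_nonneg z

theorem dotProduct_le_half_add (a z : n → ℝ) : a ⬝ᵥ z ≤ (a ⬝ᵥ a + z ⬝ᵥ z) / 2 := by
  have := dotProduct_self_nonneg (a - z)
  simp only [sub_dotProduct, dotProduct_sub, dotProduct_comm z a] at this
  linarith

theorem abs_mul_le_dotProduct_self (z : n → ℝ) (k l : n) : |z k * z l| ≤ z ⬝ᵥ z := by
  have hsq : ∀ j, z j ^ 2 ≤ z ⬝ᵥ z := fun j =>
    (sq (z j)).symm ▸ single_le_sum (f := fun j => z j * z j) (fun j _ => mul_self_nonneg _)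
      (mem_univ j)
  have := two_mul_le_add_sq |z k| |z l|
  rw [abs_mul]
  nlinarith [hsq k, hsq l, sq_abs (z k), sq_abs (z l)]

theorem dotProduct_mulVec_le (B : Matrix n n ℝ) (z : n → ℝ) :
    z ⬝ᵥ B *ᵥ z ≤ (∑ k, ∑ l, |B k l|) * (z ⬝ᵥ z) := by
  calc z ⬝ᵥ B *ᵥ z = ∑ k, ∑ l, B k l * (z k * z l) := by
        simp only [dotProduct, mulVec, mul_sum]
        exact sum_congr rfl fun _ _ => sum_congr rfl fun _ _ => by ring
    _ ≤ ∑ k, ∑ l, |B k l| * (z ⬝ᵥ z) := by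
        refine sum_le_sum fun k _ => sum_le_sum fun l _ => ?_
        calc B k l * (z k * z l) ≤ |B k l * (z k * z l)| := le_abs_self _
          _ ≤ |B k l| * (z ⬝ᵥ z) := by
            rw [abs_mul]
            exact mul_le_mul_of_nonneg_left (abs_mul_le_dotProduct_self z k l) (abs_nonneg _)
    _ = (∑ k, ∑ l, |B k l|) * (z ⬝ᵥ z) := by simp only [sum_mul]

variable [DecidableEq n]

theorem four_le_dotProduct_self_add_single {x : n → ℝ} (hx : x ⬝ᵥ x = 1) (k : n)
    {c : ℝ} (hc : 3 ≤ |c|) : 4 ≤ (x + Pi.single k c) ⬝ᵥ (x + Pi.single k c) := by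
  have hxk : |x k| ≤ 1 := by
    have := hx ▸ abs_mul_le_dotProduct_self x k k
    rw [abs_mul] at this
    nlinarith [abs_nonneg (x k)]
  have hcx : -|c| ≤ c * x k := by
    have : |c * x k| ≤ |c| := abs_mul c (x k) ▸ mul_le_of_le_one_right (abs_nonneg c) hxk
    exact (neg_le_neg this).trans (neg_abs_le _)
  simp only [add_dotProduct, dotProduct_add, single_dotProduct, dotProduct_single, hx,
    Pi.add_apply, Pi.single_eq_same]
  nlinarith [sq_abs c]

theorem dotProduct_sum_single (v : n → ℝ) (s : Finset n) (c : ℝ) :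
    v ⬝ᵥ ∑ j ∈ s, Pi.single j c = c * ∑ j ∈ s, v j := by
  simp [dotProduct_sum, dotProduct_single, mul_sum, mul_comm]

theorem sum_single_dotProduct_mulVec (B : Matrix n n ℝ) (s : Finset n) (c : ℝ) :
    (∑ j ∈ s, Pi.single j c) ⬝ᵥ B *ᵥ ∑ j ∈ s, Pi.single j c =
      c * c * ∑ j ∈ s, ∑ l ∈ s, B j l := by
  simp [mulVec_sum, sum_dotProduct, single_dotProduct, mulVec_single, mul_sum, mul_comm,
    mul_left_comm]

end DotProduct

variable {d : ℕ}

theorem Gaussians.nonneg {g : (Fin d → ℝ) → ℝ} (hg : g ∈ Gaussians d) (x : Fin d → ℝ) :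
    0 ≤ g x := by
  obtain ⟨μ, S, -, rfl⟩ := hg
  unfold gaussianDensity
  positivity

theorem Gaussians.comp_sub {g : (Fin d → ℝ) → ℝ} (hg : g ∈ Gaussians d) (v : Fin d → ℝ) :
    (fun x => g (x - v)) ∈ Gaussians d := by
  obtain ⟨μ, S, hS, rfl⟩ := hg
  refine ⟨μ + v, S, hS, funext fun x => ?_⟩
  simp only [gaussianDensity, sub_sub, add_comm v μ]

theorem exists_mem_gaussians_eq_exp {A : Matrix (Fin d) (Fin d) ℝ} (hA : A.PosDef)
    (a : Fin d → ℝ) : ∃ g ∈ Gaussians d, ∃ κ > 0, ∀ z,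
      g z = κ * Real.exp (a ⬝ᵥ z - z ⬝ᵥ A *ᵥ z) := by
  have h2A : ((2 : ℝ) • A).PosDef := hA.smul two_pos
  have hunit : IsUnit ((2 : ℝ) • A).det := h2A.det_pos.ne'.isUnit
  set μ := ((2 : ℝ) • A)⁻¹ *ᵥ a
  have hAμ : ((2 : ℝ) • A) *ᵥ μ = a := by
    rw [mulVec_mulVec, mul_nonsing_inv _ hunit, one_mulVec]
  have hsymm : Aᵀ = A := (isHermitian_iff_isSymm.1 hA.1).eq
  refine ⟨gaussianDensity μ ((2 : ℝ) • A)⁻¹, ⟨μ, _, h2A.inv, rfl⟩,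
    (2 * Real.pi) ^ (-(d : ℝ) / 2) * |((2 : ℝ) • A)⁻¹.det| ^ (-(1 : ℝ) / 2) *
      Real.exp (-(μ ⬝ᵥ A *ᵥ μ)), ?_, fun z => ?_⟩
  · have := h2A.inv.det_pos
    positivity
  have hcross : z ⬝ᵥ A *ᵥ μ + μ ⬝ᵥ A *ᵥ z = a ⬝ᵥ z := by
    have hμz : μ ⬝ᵥ A *ᵥ z = z ⬝ᵥ A *ᵥ μ := by rw [← dotProduct_transpose_mulVec, hsymm]
    rw [hμz, ← two_mul, ← hAμ, dotProduct_comm,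
      smul_mulVec, smul_dotProduct, smul_eq_mul]
  simp only [gaussianDensity, nonsing_inv_nonsing_inv _ hunit, mul_assoc, ← Real.exp_add]
  congr 3
  simp only [smul_mulVec, mulVec_sub, dotProduct_smul, sub_dotProduct, dotProduct_sub,
    smul_eq_mul]
  linarith

abbrev BaseIndex (d : ℕ) := (Bool × Fin d) ⊕ {s : Finset (Fin d) // #s = 2}

noncomputable def basePoint : BaseIndex d → Fin d → ℝ
  | .inl (σ, k) => Pi.single k (if σ then 1 else -1)
  | .inr s => ∑ j ∈ s.1, Pi.single j (√2)⁻¹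

theorem card_baseIndex (d : ℕ) : Fintype.card (BaseIndex d) = (d ^ 2 + 3 * d) / 2 := by
  have h : d ^ 2 + 3 * d = d * (d - 1) + 2 * (2 * d) := by
    cases d with
    | zero => rfl
    | succ m => rw [add_tsub_cancel_right]; ring
  simp [h, Nat.add_mul_div_left, Nat.choose_two_right, add_comm]

theorem inv_sqrt_two_mul_self : (√2)⁻¹ * (√2)⁻¹ = (2 : ℝ)⁻¹ := by
  rw [← mul_inv, Real.mul_self_sqrt zero_le_two]

theorem basePoint_dotProduct_self (u : BaseIndex d) : basePoint u ⬝ᵥ basePoint u = 1 := by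
  rcases u with ⟨σ, k⟩ | ⟨s, hs⟩
  · cases σ <;> simp [basePoint]
  · obtain ⟨k, l, hkl, rfl⟩ := card_eq_two.1 hs
    rw [basePoint, ← congrArg (_ ⬝ᵥ ·) (one_mulVec _), sum_single_dotProduct_mulVec]
    norm_num [sum_pair hkl, one_apply, hkl, hkl.symm, inv_sqrt_two_mul_self]

section Interpolation

variable (t : BaseIndex d → ℝ)

noncomputable def interpLinear (k : Fin d) : ℝ := (t (.inl (true, k)) - t (.inl (false, k))) / 2

noncomputable def interpDiag (k : Fin d) : ℝ := (t (.inl (true, k)) + t (.inl (false, k))) / 2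

noncomputable def interpMatrix : Matrix (Fin d) (Fin d) ℝ := fun k l =>
  if h : k = l then interpDiag t k
  else t (.inr ⟨{k, l}, card_pair h⟩) -
    ∑ j ∈ {k, l}, ((√2)⁻¹ * interpLinear t j + interpDiag t j / 2)

theorem interpMatrix_isSymm : (interpMatrix t).IsSymm := by
  ext k l
  by_cases h : l = k
  · subst h; rfl
  · simp only [transpose_apply, interpMatrix, dif_neg h, dif_neg (Ne.symm h), pair_comm]

theorem interp_eval_basePoint (u : BaseIndex d) :
    interpLinear t ⬝ᵥ basePoint u + basePoint u ⬝ᵥ interpMatrix t *ᵥ basePoint u = t u := by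
  rcases u with ⟨σ, k⟩ | ⟨s, hs⟩
  · rw [basePoint, ← sum_singleton (fun j => Pi.single j (if σ then (1 : ℝ) else -1)) k,
      dotProduct_sum_single, sum_single_dotProduct_mulVec]
    cases σ <;>
      simp only [Bool.false_eq_true, ↓reduceIte, ↓reduceDIte, sum_singleton, interpLinear,
        interpDiag, interpMatrix] <;> ring
  · obtain ⟨k, l, hkl, rfl⟩ := card_eq_two.1 hs
    rw [basePoint, dotProduct_sum_single, sum_single_dotProduct_mulVec, inv_sqrt_two_mul_self]
    simp only [sum_pair hkl, interpMatrix, dif_pos, dif_neg hkl, dif_neg (Ne.symm hkl), pair_comm l k]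
    ring

end Interpolation

theorem exists_gaussian_eq_on_basePoint_and_le_off_ball (v : BaseIndex d → ℝ)
    (hv : ∀ u, 0 < v u) {ε : ℝ} (hε : 0 < ε) : ∃ g ∈ Gaussians d, ∃ c > 0,
      (∀ u, c * g (basePoint u) = v u) ∧ ∀ z, 4 ≤ z ⬝ᵥ z → c * g z ≤ ε := by
  set t := fun u => Real.log (v u)
  set a := interpLinear t
  set B := interpMatrix t
  set C := ∑ k, ∑ l, |B k l|
  have hC : 0 ≤ C := by positivity
  have hB : ∀ z, z ⬝ᵥ B *ᵥ z ≤ C * (z ⬝ᵥ z) := dotProduct_mulVec_le B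
  -- large enough for `lam • 1 - B` to be positive definite and for the exponent of `g`
  -- below to stay under `log ε` outside the ball of radius `2`
  set lam := a ⬝ᵥ a + 2 * C + 1 + |Real.log ε| with hlam
  have hquad : ∀ z, z ⬝ᵥ (lam • 1 - B) *ᵥ z = lam * (z ⬝ᵥ z) - z ⬝ᵥ B *ᵥ z := fun z => by
    rw [sub_mulVec, smul_mulVec, one_mulVec, dotProduct_sub, dotProduct_smul, smul_eq_mul]
  have hA : (lam • 1 - B).PosDef := by
    refine .of_dotProduct_mulVec_pos (isHermitian_iff_isSymm.2 ?_) fun z hz => ?_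
    · exact (isSymm_one.smul lam).sub (interpMatrix_isSymm t)
    · have hz' : 0 < z ⬝ᵥ z :=
        (dotProduct_self_nonneg z).lt_of_ne' (dotProduct_self_eq_zero.not.2 hz)
      rw [star_trivial, hquad]
      nlinarith [hB z, dotProduct_self_nonneg a, abs_nonneg (Real.log ε)]
  obtain ⟨g, hg, κ, hκ, hgz⟩ := exists_mem_gaussians_eq_exp hA a
  have hcg : ∀ z, Real.exp lam / κ * g z =
      Real.exp (lam + (a ⬝ᵥ z + z ⬝ᵥ B *ᵥ z) - lam * (z ⬝ᵥ z)) := fun z => by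
    rw [hgz, hquad, ← mul_assoc, div_mul_cancel₀ _ hκ.ne', ← Real.exp_add]
    ring_nf
  refine ⟨g, hg, Real.exp lam / κ, by positivity, fun u => ?_, fun z hz => ?_⟩
  · rw [hcg, interp_eval_basePoint, basePoint_dotProduct_self, mul_one, add_sub_cancel_left,
      Real.exp_log (hv u)]
  · rw [hcg, ← Real.exp_log hε]
    gcongr
    have hz4 : 0 ≤ z ⬝ᵥ z - 4 := by linarith
    rw [hlam]
    nlinarith [hB z, dotProduct_le_half_add a z, dotProduct_self_nonneg a,
      abs_nonneg (Real.log ε), mul_nonneg (dotProduct_self_nonneg a) hz4, mul_nonneg hC hz4,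
      mul_nonneg (abs_nonneg (Real.log ε)) hz4, neg_abs_le (Real.log ε)]

theorem three_le_abs_three_mul_sub {N : ℕ} {i j : Fin N} (h : i ≠ j) :
    3 ≤ |3 * (i : ℝ) - 3 * j| := by
  have hij : ((i : ℕ) : ℤ) - (j : ℕ) ≠ 0 := sub_ne_zero.2 (by exact_mod_cast Fin.val_ne_of_ne h)
  have : (1 : ℝ) ≤ |(i : ℝ) - j| := by exact_mod_cast Int.one_le_abs hij
  rw [← mul_sub, abs_mul, abs_of_pos three_pos]
  linarith

noncomputable def clusterPoint {N : ℕ} (k₀ : Fin d) (q : Fin N × BaseIndex d) : Fin d → ℝ :=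
  basePoint q.2 + Pi.single k₀ (3 * ((q.1 : ℕ) : ℝ))

theorem exists_mem_superLevels_clusterPoint_mem_iff {N : ℕ} (hN : 0 < N) (k₀ : Fin d)
    (Y : Set (Fin N × BaseIndex d)) :
    ∃ B ∈ SuperLevels (Mixtures N (Gaussians d)), ∀ q, clusterPoint k₀ q ∈ B ↔ q ∈ Y := by
  classical
  set ε : ℝ := (2 * N)⁻¹
  have hε : 0 < ε := by positivity
  choose g hg c hc hval hfar using fun i : Fin N =>
    exists_gaussian_eq_on_basePoint_and_le_off_ball (fun u => if (i, u) ∈ Y then 1 else ε)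
      (fun u => by split_ifs <;> positivity) hε
  set G : Fin N → (Fin d → ℝ) → ℝ := fun i x => g i (x - Pi.single k₀ (3 * ((i : ℕ) : ℝ)))
  have hG : ∀ i, G i ∈ Gaussians d := fun i => Gaussians.comp_sub (hg i) _
  refine ⟨_, setOf_lt_sum_mem_superLevels_mixtures hN hG hc (half_pos one_pos), ?_⟩
  rintro ⟨i, u⟩
  let x := clusterPoint k₀ (i, u)
  have hself : c i * G i x = if (i, u) ∈ Y then 1 else ε := by
    simp only [G, x, clusterPoint, add_sub_cancel_right, hval]
  have hother : ∀ j ≠ i, c j * G j x ≤ ε := fun j hj => hfar j _ <| by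
    simp only [x, clusterPoint, add_sub_assoc, ← Pi.single_sub]
    exact four_le_dotProduct_self_add_single (basePoint_dotProduct_self u) k₀
      (three_le_abs_three_mul_sub hj.symm)
  -- the sum is at least `1` on `Y` and at most `N ε = 1 / 2` off `Y`
  simp only [Set.mem_ofPred_eq]
  split_ifs at hself with hq <;> simp only [hq, iff_true, iff_false, not_lt]
  · calc (1 / 2 : ℝ) < c i * G i x := by rw [hself]; norm_num
      _ ≤ ∑ j, c j * G j x := single_le_sum (f := fun j => c j * G j x)
          (fun j _ => mul_nonneg (hc j).le (Gaussians.nonneg (hG j) _)) (mem_univ i)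
  · calc ∑ j, c j * G j x ≤ ∑ _j : Fin N, ε := sum_le_sum fun j _ => by
          rcases eq_or_ne j i with rfl | hj
          · exact hself.le
          · exact hother j hj
      _ = 1 / 2 := by
          rw [sum_const, card_univ, Fintype.card_fin, nsmul_eq_mul]
          simp only [ε]
          field_simp

end

theorem vcDim_gaussian_mixtures_ge (N d : ℕ) :
    ((N * ((d ^ 2 + 3 * d) / 2) : ℕ) : ℕ∞) ≤ vcDim (SuperLevels (Mixtures N (Gaussians d))) := by
  obtain rfl | hN := N.eq_zero_or_pos
  · simp
  obtain rfl | hd := d.eq_zero_or_pos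
  · simp
  simpa only [Fintype.card_prod, Fintype.card_fin, card_baseIndex, Nat.cast_mul] using
    card_le_vcDim_of_forall_exists_iff _ (exists_mem_superLevels_clusterPoint_mem_iff hN ⟨0, hd⟩)
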